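/- arXiv:2308.14609 — 4 statements merged into one kernel-verified Lean document; each statement's English description precedes it below -/
import Mathlib

section
/- Assume every unobservable eigenvalue γ of (A,C) satisfies |γ| ≠ 1, the constraint set S is a nonempty closed convex subset of ℝ^n × ℝ^m containing at least one steady state, and K is invertible. Then the constrained optimal steady state problem — minimize ℓ(x,u) = ‖Cx‖² + ‖Ku‖² + 2⟨z,x⟩ + 2⟨v,u⟩ + c subject to (x,u) ∈ S and Ax + Bu = x — admits a minimizer. -/
open Matrix

/-- Auxiliary: continuity of a dot product of continuous vector-valued maps. -/
lemma continuous_dotProduct_comp {ι X : Type*} [Fintype ι] [TopologicalSpace X]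
    {f g : X → ι → ℝ} (hf : Continuous f) (hg : Continuous g) :
    Continuous fun x => f x ⬝ᵥ g x := by
  simp only [dotProduct]
  exact continuous_finset_sum _ fun i _ =>
    ((continuous_apply i).comp hf).mul ((continuous_apply i).comp hg)

/-- Auxiliary: bound on a dot product by the sup norm. -/
lemma abs_dotProduct_le {ι : Type*} [Fintype ι] (z x : ι → ℝ) :
    |z ⬝ᵥ x| ≤ (∑ i, |z i|) * ‖x‖ := by
  calc |z ⬝ᵥ x| ≤ ∑ i, |z i * x i| := Finset.abs_sum_le_sum_abs _ _
    _ ≤ ∑ i, |z i| * ‖x‖ := by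
        refine Finset.sum_le_sum fun i _ => ?_
        rw [abs_mul]
        exact mul_le_mul_of_nonneg_left (norm_le_pi_norm x i) (abs_nonneg _)
    _ = (∑ i, |z i|) * ‖x‖ := by rw [Finset.sum_mul]

/-- Auxiliary: nonnegativity of `w ⬝ᵥ w`. -/
lemma dotProduct_self_nonneg' {ι : Type*} [Fintype ι] (w : ι → ℝ) : 0 ≤ w ⬝ᵥ w :=
  Finset.sum_nonneg fun i _ => mul_self_nonneg (w i)

/-- Existence of a constrained optimal steady state: under the unobservable-eigenvalue
condition, with `S` nonempty closed convex containing a steady state and `K` invertible,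
the problem `min ℓ(x,u)` subject to `(x,u) ∈ S` and `Ax + Bu = x` admits a minimizer. -/
theorem constrained_optimal_steady_state_exists
    (n m : ℕ)
    (A C : Matrix (Fin n) (Fin n) ℝ)
    (B : Matrix (Fin n) (Fin m) ℝ)
    (K : Matrix (Fin m) (Fin m) ℝ) (hK : IsUnit K.det)
    (z : Fin n → ℝ) (v : Fin m → ℝ) (c : ℝ)
    (hobs : ∀ (γ : ℝ) (x₀ : Fin n → ℝ), x₀ ≠ 0 → A.mulVec x₀ = γ • x₀ → |γ| = 1 →
      C.mulVec x₀ ≠ 0)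
    (S : Set ((Fin n → ℝ) × (Fin m → ℝ)))
    (hSne : S.Nonempty) (hSclosed : IsClosed S) (hSconv : Convex ℝ S)
    (hsteady : ∃ p ∈ S, A.mulVec p.1 + B.mulVec p.2 = p.1) :
    ∃ p ∈ S, A.mulVec p.1 + B.mulVec p.2 = p.1 ∧
      ∀ q ∈ S, A.mulVec q.1 + B.mulVec q.2 = q.1 →
        (C.mulVec p.1) ⬝ᵥ (C.mulVec p.1) + (K.mulVec p.2) ⬝ᵥ (K.mulVec p.2)
            + 2 * (z ⬝ᵥ p.1) + 2 * (v ⬝ᵥ p.2) + c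
          ≤ (C.mulVec q.1) ⬝ᵥ (C.mulVec q.1) + (K.mulVec q.2) ⬝ᵥ (K.mulVec q.2)
            + 2 * (z ⬝ᵥ q.1) + 2 * (v ⬝ᵥ q.2) + c := by
  classical
  obtain ⟨p₀, hp₀S, hp₀V⟩ := hsteady
  -- the quadratic part and the full objective
  set qf : ((Fin n → ℝ) × (Fin m → ℝ)) → ℝ :=
    fun p => (C.mulVec p.1) ⬝ᵥ (C.mulVec p.1) + (K.mulVec p.2) ⬝ᵥ (K.mulVec p.2) with hqf
  set f : ((Fin n → ℝ) × (Fin m → ℝ)) → ℝ :=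
    fun p => qf p + 2 * (z ⬝ᵥ p.1) + 2 * (v ⬝ᵥ p.2) + c with hf
  set V : Set ((Fin n → ℝ) × (Fin m → ℝ)) :=
    {p | A.mulVec p.1 + B.mulVec p.2 = p.1} with hVdef
  -- continuity facts
  have hcontA : Continuous fun p : (Fin n → ℝ) × (Fin m → ℝ) => A.mulVec p.1 :=
    A.mulVecLin.continuous_of_finiteDimensional.comp continuous_fst
  have hcontB : Continuous fun p : (Fin n → ℝ) × (Fin m → ℝ) => B.mulVec p.2 :=
    B.mulVecLin.continuous_of_finiteDimensional.comp continuous_snd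
  have hcontC : Continuous fun p : (Fin n → ℝ) × (Fin m → ℝ) => C.mulVec p.1 :=
    C.mulVecLin.continuous_of_finiteDimensional.comp continuous_fst
  have hcontK : Continuous fun p : (Fin n → ℝ) × (Fin m → ℝ) => K.mulVec p.2 :=
    K.mulVecLin.continuous_of_finiteDimensional.comp continuous_snd
  have hqcont : Continuous qf :=
    (continuous_dotProduct_comp hcontC hcontC).add (continuous_dotProduct_comp hcontK hcontK)
  have hcz : Continuous fun p : (Fin n → ℝ) × (Fin m → ℝ) => z ⬝ᵥ p.1 :=
    continuous_dotProduct_comp continuous_const continuous_fst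
  have hcv : Continuous fun p : (Fin n → ℝ) × (Fin m → ℝ) => v ⬝ᵥ p.2 :=
    continuous_dotProduct_comp continuous_const continuous_snd
  have hfcont : Continuous f :=
    ((hqcont.add (continuous_const.mul hcz)).add (continuous_const.mul hcv)).add
      continuous_const
  have hVclosed : IsClosed V :=
    isClosed_eq (hcontA.add hcontB) continuous_fst
  -- V is closed under scalar multiplication
  have hVsmul : ∀ (t : ℝ) (p : (Fin n → ℝ) × (Fin m → ℝ)), p ∈ V → t • p ∈ V := by
    intro t p hp
    simp only [hVdef, Set.mem_setOf_eq] at hp ⊢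
    simp only [Prod.smul_fst, Prod.smul_snd, Matrix.mulVec_smul, ← smul_add, hp]
  -- positivity of qf on V \ {0}
  have hqpos : ∀ p ∈ V, p ≠ 0 → 0 < qf p := by
    intro p hp hp0
    have h1 : 0 ≤ (C.mulVec p.1) ⬝ᵥ (C.mulVec p.1) := dotProduct_self_nonneg' _
    have h2 : 0 ≤ (K.mulVec p.2) ⬝ᵥ (K.mulVec p.2) := dotProduct_self_nonneg' _
    rcases (add_nonneg h1 h2 : (0:ℝ) ≤ qf p).lt_or_eq with h | h
    · exact h
    exfalso
    have hsum : (C.mulVec p.1) ⬝ᵥ (C.mulVec p.1) + (K.mulVec p.2) ⬝ᵥ (K.mulVec p.2) = 0 := by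
      exact h.symm
    have hCz : C.mulVec p.1 = 0 :=
      dotProduct_self_eq_zero.mp (by linarith)
    have hKz' : K.mulVec p.2 = 0 :=
      dotProduct_self_eq_zero.mp (by linarith)
    have hu0 : p.2 = 0 := by
      have := congrArg (K⁻¹.mulVec ·) hKz'
      simpa [Matrix.mulVec_mulVec, Matrix.nonsing_inv_mul K hK] using this
    have hx : A.mulVec p.1 = p.1 := by
      have := hp
      simp only [hVdef, Set.mem_setOf_eq, hu0, Matrix.mulVec_zero, add_zero] at this
      exact this
    have hx0 : p.1 ≠ 0 := by
      intro h0
      exact hp0 (Prod.ext h0 hu0)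
    exact hobs 1 p.1 hx0 (by simpa using hx) (by norm_num) hCz
  -- qf is 2-homogeneous
  have hqsmul : ∀ (t : ℝ) (p : (Fin n → ℝ) × (Fin m → ℝ)), qf (t • p) = t ^ 2 * qf p := by
    intro t p
    simp only [hqf, Prod.smul_fst, Prod.smul_snd, Matrix.mulVec_smul,
      smul_dotProduct, dotProduct_smul, smul_eq_mul]
    ring
  -- coercivity constant
  have hε : ∃ ε > 0, ∀ p ∈ V, ε * ‖p‖ ^ 2 ≤ qf p := by
    by_cases hV0 : ∀ p ∈ V, p = 0
    · refine ⟨1, one_pos, fun p hp => ?_⟩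
      have := hV0 p hp
      subst this
      simp [hqf]
    · push_neg at hV0
      obtain ⟨p₁, hp₁V, hp₁0⟩ := hV0
      set Sph : Set ((Fin n → ℝ) × (Fin m → ℝ)) := V ∩ Metric.sphere 0 1 with hSph
      have hSphne : Sph.Nonempty := by
        refine ⟨‖p₁‖⁻¹ • p₁, hVsmul _ _ hp₁V, ?_⟩
        have h : ‖p₁‖ ≠ 0 := norm_ne_zero_iff.mpr hp₁0
        simp [norm_smul, abs_of_nonneg (inv_nonneg.mpr (norm_nonneg p₁)), inv_mul_cancel₀ h]
      have hSphcompact : IsCompact Sph := by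
        refine IsCompact.of_isClosed_subset (isCompact_closedBall (0 : (Fin n → ℝ) × (Fin m → ℝ)) 1)
          (hVclosed.inter Metric.isClosed_sphere) ?_
        exact fun x hx => Metric.sphere_subset_closedBall hx.2
      obtain ⟨pm, hpmSph, hpmmin⟩ := hSphcompact.exists_isMinOn hSphne hqcont.continuousOn
      have hpm0 : pm ≠ 0 := by
        intro h0
        have := hpmSph.2
        rw [h0] at this
        simp at this
      refine ⟨qf pm, hqpos pm hpmSph.1 hpm0, fun p hp => ?_⟩
      by_cases hp0 : p = 0
      · subst hp0; simp [hqf]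
      · have hnp : (0:ℝ) < ‖p‖ := norm_pos_iff.mpr hp0
        have hmem : (‖p‖⁻¹ • p) ∈ Sph := by
          refine ⟨hVsmul _ _ hp, ?_⟩
          simp [norm_smul, abs_of_nonneg (inv_nonneg.mpr (norm_nonneg p)),
            inv_mul_cancel₀ hnp.ne']
        have h2' : qf pm ≤ qf (‖p‖⁻¹ • p) := hpmmin hmem
        rw [hqsmul] at h2'
        have h2 : qf pm ≤ ‖p‖⁻¹ ^ 2 * qf p := h2' 
        calc qf pm * ‖p‖ ^ 2 ≤ (‖p‖⁻¹ ^ 2 * qf p) * ‖p‖ ^ 2 := by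
              exact mul_le_mul_of_nonneg_right h2 (sq_nonneg _)
          _ = qf p := by
              field_simp
  obtain ⟨ε, hεpos, hεle⟩ := hε
  -- linear bound
  set M : ℝ := 2 * (∑ i, |z i|) + 2 * (∑ j, |v j|) with hM
  have hMnn : 0 ≤ M := by
    have h1 : (0:ℝ) ≤ ∑ i, |z i| := Finset.sum_nonneg fun i _ => abs_nonneg _
    have h2 : (0:ℝ) ≤ ∑ j, |v j| := Finset.sum_nonneg fun j _ => abs_nonneg _
    positivity
  have hflb : ∀ p : (Fin n → ℝ) × (Fin m → ℝ), p ∈ V → ε * ‖p‖ ^ 2 - M * ‖p‖ + c ≤ f p := by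
    intro p hp
    have hz := abs_dotProduct_le z p.1
    have hv := abs_dotProduct_le v p.2
    have hz1 : -(∑ i, |z i|) * ‖p‖ ≤ z ⬝ᵥ p.1 := by
      have h1 : -((∑ i, |z i|) * ‖p.1‖) ≤ z ⬝ᵥ p.1 := neg_le_of_abs_le hz
      have h2 : (∑ i, |z i|) * ‖p.1‖ ≤ (∑ i, |z i|) * ‖p‖ :=
        mul_le_mul_of_nonneg_left (norm_fst_le p) (Finset.sum_nonneg fun i _ => abs_nonneg _)
      nlinarith
    have hv1 : -(∑ j, |v j|) * ‖p‖ ≤ v ⬝ᵥ p.2 := by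
      have h1 : -((∑ j, |v j|) * ‖p.2‖) ≤ v ⬝ᵥ p.2 := neg_le_of_abs_le hv
      have h2 : (∑ j, |v j|) * ‖p.2‖ ≤ (∑ j, |v j|) * ‖p‖ :=
        mul_le_mul_of_nonneg_left (norm_snd_le p) (Finset.sum_nonneg fun j _ => abs_nonneg _)
      nlinarith
    have hq := hεle p hp
    simp only [hf, hM]
    nlinarith
  -- bound on the sublevel set
  set R : ℝ := max 1 ((|f p₀ - c| + M) / ε) with hR
  have hsub : ∀ p : (Fin n → ℝ) × (Fin m → ℝ), p ∈ V → f p ≤ f p₀ → ‖p‖ ≤ R := by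
    intro p hp hfp
    have hlb := hflb p hp
    have key : ε * ‖p‖ ^ 2 ≤ |f p₀ - c| + M * ‖p‖ := by
      have : f p - c ≤ |f p₀ - c| := le_trans (by linarith) (le_abs_self _)
      nlinarith
    rcases le_or_gt ‖p‖ 1 with h1 | h1
    · exact le_trans h1 (le_max_left _ _)
    · have hnp : (0:ℝ) < ‖p‖ := lt_trans one_pos h1
      have h2 : ε * ‖p‖ ^ 2 ≤ (|f p₀ - c| + M) * ‖p‖ := by
        have := abs_nonneg (f p₀ - c)
        nlinarith
      have h3 : ε * ‖p‖ ≤ |f p₀ - c| + M := by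
        have := mul_le_mul_of_nonneg_right h2 (inv_nonneg.mpr hnp.le)
        calc ε * ‖p‖ = ε * ‖p‖ ^ 2 * ‖p‖⁻¹ := by field_simp
          _ ≤ (|f p₀ - c| + M) * ‖p‖ * ‖p‖⁻¹ := this
          _ = |f p₀ - c| + M := by field_simp
      have h4 : ‖p‖ ≤ (|f p₀ - c| + M) / ε := (le_div_iff₀ hεpos).mpr (by linarith)
      exact le_trans h4 (le_max_right _ _)
  -- the compact set
  set T : Set ((Fin n → ℝ) × (Fin m → ℝ)) := (S ∩ V) ∩ Metric.closedBall 0 R with hT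
  have hTcompact : IsCompact T := by
    refine IsCompact.of_isClosed_subset (isCompact_closedBall (0 : (Fin n → ℝ) × (Fin m → ℝ)) R)
      (((hSclosed.inter hVclosed).inter Metric.isClosed_closedBall)) ?_
    exact fun x hx => hx.2
  have hp₀T : p₀ ∈ T := by
    refine ⟨⟨hp₀S, hp₀V⟩, ?_⟩
    rw [Metric.mem_closedBall, dist_zero_right]
    exact hsub p₀ hp₀V le_rfl
  obtain ⟨p, hpT, hpmin⟩ := hTcompact.exists_isMinOn ⟨p₀, hp₀T⟩ hfcont.continuousOn
  refine ⟨p, hpT.1.1, hpT.1.2, ?_⟩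
  intro q hqS hqV
  have goal_eq : ∀ r : (Fin n → ℝ) × (Fin m → ℝ),
      (C.mulVec r.1) ⬝ᵥ (C.mulVec r.1) + (K.mulVec r.2) ⬝ᵥ (K.mulVec r.2)
        + 2 * (z ⬝ᵥ r.1) + 2 * (v ⬝ᵥ r.2) + c = f r := fun r => rfl
  rw [goal_eq p, goal_eq q]
  rcases le_or_gt (f q) (f p₀) with h | h
  · have hqT : q ∈ T := by
      refine ⟨⟨hqS, hqV⟩, ?_⟩
      rw [Metric.mem_closedBall, dist_zero_right]
      exact hsub q hqV h
    exact hpmin hqT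
  · exact le_trans (hpmin hp₀T) h.le
end

section
/- Suppose there exist a symmetric matrix P ∈ ℝ^{n×n} and s > 0 such that for all (x,u) ∈ ℝ^n × ℝ^m: (Ax+Bu)ᵀP(Ax+Bu) − xᵀPx ≤ ‖Cx‖² + ‖Ku‖² − s(‖x‖² + ‖u‖²). Let (x_e,u_e) be a steady state (Ax_e + Bu_e = x_e) at which the KKT conditions hold for the constrained steady-state problem: there exist λ ∈ ℝ^n, μ ≥ 0, and a subgradient ν of the convex constraint function g at (x_e,u_e), with 2CᵀCx_e + 2z + (Aᵀ−I)λ + μ·ν_x = 0, 2KᵀKu_e + 2v + Bᵀλ + μ·ν_u = 0, and μ g(x_e,u_e) = 0. Then, setting w = −λ − 2P x_e and V(x) = xᵀPx + ⟨w,x⟩, we have for all (x,u) with g(x,u) ≤ 0: V(Ax+Bu) − V(x) ≤ ℓ(x,u) − ℓ(x_e,u_e) − s(‖x − x_e‖² + ‖u − u_e‖²). That is, the constrained LQ problem is strictly pre-dissipative at (x_e,u_e) with storage function V. -/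
open Matrix

/-- Strict pre-dissipativity of the constrained LQ problem: given a symmetric `P`
and `s > 0` satisfying the unconstrained dissipation inequality, and a steady state
`(x_e, u_e)` at which the KKT conditions hold with multipliers `λ`, `μ` and a
subgradient `ν = (ν_x, ν_u)` of the convex constraint `g`, the storage function
`V(x) = xᵀPx + ⟨w, x⟩` with `w = −λ − 2Px_e` satisfies
`V(Ax+Bu) − V(x) ≤ ℓ(x,u) − ℓ(x_e,u_e) − s(‖x−x_e‖² + ‖u−u_e‖²)` on `S = {g ≤ 0}`. -/
theorem strict_pre_dissipativity
    (n m : ℕ)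
    (A C : Matrix (Fin n) (Fin n) ℝ)
    (B : Matrix (Fin n) (Fin m) ℝ)
    (K : Matrix (Fin m) (Fin m) ℝ)
    (z : Fin n → ℝ) (v : Fin m → ℝ) (c : ℝ)
    (ℓ : (Fin n → ℝ) → (Fin m → ℝ) → ℝ)
    (hℓ : ∀ x u, ℓ x u = x ⬝ᵥ (Cᵀ * C).mulVec x + u ⬝ᵥ (Kᵀ * K).mulVec u
            + 2 * (z ⬝ᵥ x) + 2 * (v ⬝ᵥ u) + c)
    (g : (Fin n → ℝ) × (Fin m → ℝ) → ℝ) (hg : ConvexOn ℝ Set.univ g)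
    (P : Matrix (Fin n) (Fin n) ℝ) (hP : P.IsSymm)
    (s : ℝ) (hs : 0 < s)
    (hdiss : ∀ (x : Fin n → ℝ) (u : Fin m → ℝ),
      (A.mulVec x + B.mulVec u) ⬝ᵥ P.mulVec (A.mulVec x + B.mulVec u)
          - x ⬝ᵥ P.mulVec x
        ≤ (C.mulVec x) ⬝ᵥ (C.mulVec x) + (K.mulVec u) ⬝ᵥ (K.mulVec u)
          - s * (x ⬝ᵥ x + u ⬝ᵥ u))
    (xe : Fin n → ℝ) (ue : Fin m → ℝ)
    (hsteady : A.mulVec xe + B.mulVec ue = xe)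
    (lam : Fin n → ℝ) (μ : ℝ) (hμ : 0 ≤ μ)
    (νx : Fin n → ℝ) (νu : Fin m → ℝ)
    (hsub : ∀ (y : Fin n → ℝ) (w : Fin m → ℝ),
      g (xe, ue) + νx ⬝ᵥ (y - xe) + νu ⬝ᵥ (w - ue) ≤ g (y, w))
    (hstatx : (2 : ℝ) • (Cᵀ * C).mulVec xe + (2 : ℝ) • z
        + (Aᵀ - 1).mulVec lam + μ • νx = 0)
    (hstatu : (2 : ℝ) • (Kᵀ * K).mulVec ue + (2 : ℝ) • v
        + Bᵀ.mulVec lam + μ • νu = 0)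
    (hcs : μ * g (xe, ue) = 0)
    (w : Fin n → ℝ) (hw : w = -lam - (2 : ℝ) • P.mulVec xe)
    (V : (Fin n → ℝ) → ℝ)
    (hV : ∀ x, V x = x ⬝ᵥ P.mulVec x + w ⬝ᵥ x) :
    ∀ (x : Fin n → ℝ) (u : Fin m → ℝ), g (x, u) ≤ 0 →
      V (A.mulVec x + B.mulVec u) - V x
        ≤ ℓ x u - ℓ xe ue - s * ((x - xe) ⬝ᵥ (x - xe) + (u - ue) ⬝ᵥ (u - ue)) := by
  intro x u hxu
  have hsymP : ∀ a b : Fin n → ℝ, a ⬝ᵥ P.mulVec b = b ⬝ᵥ P.mulVec a := by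
    intro a b
    rw [Matrix.dotProduct_mulVec, ← Matrix.mulVec_transpose, hP.eq, dotProduct_comm]
  have hC : ∀ a b : Fin n → ℝ, a ⬝ᵥ (Cᵀ * C).mulVec b = C.mulVec a ⬝ᵥ C.mulVec b := by
    intro a b
    rw [← Matrix.mulVec_mulVec, Matrix.dotProduct_mulVec, ← Matrix.mulVec_transpose,
      Matrix.transpose_transpose]
  have hK : ∀ a b : Fin m → ℝ, a ⬝ᵥ (Kᵀ * K).mulVec b = K.mulVec a ⬝ᵥ K.mulVec b := by
    intro a b
    rw [← Matrix.mulVec_mulVec, Matrix.dotProduct_mulVec, ← Matrix.mulVec_transpose,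
      Matrix.transpose_transpose]
  have hAt : ∀ a : Fin n → ℝ, Aᵀ.mulVec lam ⬝ᵥ a = lam ⬝ᵥ A.mulVec a := by
    intro a; rw [Matrix.mulVec_transpose, ← Matrix.dotProduct_mulVec]
  have hBt : ∀ a : Fin m → ℝ, Bᵀ.mulVec lam ⬝ᵥ a = lam ⬝ᵥ B.mulVec a := by
    intro a; rw [Matrix.mulVec_transpose, ← Matrix.dotProduct_mulVec]
  set y : Fin n → ℝ := A.mulVec x + B.mulVec u with hy
  have hF1 : A.mulVec (x - xe) + B.mulVec (u - ue) = y - xe := by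
    have h0 : A.mulVec (x - xe) + B.mulVec (u - ue)
        = (A.mulVec x + B.mulVec u) - (A.mulVec xe + B.mulVec ue) := by
      rw [Matrix.mulVec_sub, Matrix.mulVec_sub]; abel
    rw [h0, hsteady]
  have hq : ∀ a b : Fin n → ℝ, (a - b) ⬝ᵥ P.mulVec (a - b)
      = a ⬝ᵥ P.mulVec a - 2 * (a ⬝ᵥ P.mulVec b) + b ⬝ᵥ P.mulVec b := by
    intro a b
    simp only [Matrix.mulVec_sub, dotProduct_sub, sub_dotProduct]
    linarith [hsymP a b]
  have hVd : V y - V x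
      = ((y - xe) ⬝ᵥ P.mulVec (y - xe) - (x - xe) ⬝ᵥ P.mulVec (x - xe))
        - lam ⬝ᵥ (y - x) := by
    rw [hV, hV, hw, hq y xe, hq x xe, dotProduct_sub]
    simp only [sub_dotProduct, neg_dotProduct, smul_dotProduct, smul_eq_mul]
    linarith [dotProduct_comm (P.mulVec xe) y, dotProduct_comm (P.mulVec xe) x]
  have hCq : C.mulVec (x - xe) ⬝ᵥ C.mulVec (x - xe)
      = C.mulVec x ⬝ᵥ C.mulVec x - 2 * (C.mulVec x ⬝ᵥ C.mulVec xe)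
        + C.mulVec xe ⬝ᵥ C.mulVec xe := by
    simp only [Matrix.mulVec_sub, dotProduct_sub, sub_dotProduct]
    linarith [dotProduct_comm (C.mulVec xe) (C.mulVec x)]
  have hKq : K.mulVec (u - ue) ⬝ᵥ K.mulVec (u - ue)
      = K.mulVec u ⬝ᵥ K.mulVec u - 2 * (K.mulVec u ⬝ᵥ K.mulVec ue)
        + K.mulVec ue ⬝ᵥ K.mulVec ue := by
    simp only [Matrix.mulVec_sub, dotProduct_sub, sub_dotProduct]
    linarith [dotProduct_comm (K.mulVec ue) (K.mulVec u)]
  have hℓd : ℓ x u - ℓ xe ue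
      = C.mulVec (x - xe) ⬝ᵥ C.mulVec (x - xe) + K.mulVec (u - ue) ⬝ᵥ K.mulVec (u - ue)
        + 2 * ((Cᵀ * C).mulVec xe ⬝ᵥ (x - xe)) + 2 * (z ⬝ᵥ (x - xe))
        + 2 * ((Kᵀ * K).mulVec ue ⬝ᵥ (u - ue)) + 2 * (v ⬝ᵥ (u - ue)) := by
    rw [hℓ, hℓ, hCq, hKq,
      dotProduct_comm ((Cᵀ * C).mulVec xe) (x - xe),
      dotProduct_comm ((Kᵀ * K).mulVec ue) (u - ue)]
    simp only [hC, hK, Matrix.mulVec_sub, dotProduct_sub, sub_dotProduct]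
    linarith [dotProduct_comm (C.mulVec xe) (C.mulVec x),
      dotProduct_comm (K.mulVec ue) (K.mulVec u)]
  have hex : ((2 : ℝ) • (Cᵀ * C).mulVec xe + (2 : ℝ) • z
      + (Aᵀ - 1).mulVec lam + μ • νx) ⬝ᵥ (x - xe) = 0 := by
    rw [hstatx, zero_dotProduct]
  have heu : ((2 : ℝ) • (Kᵀ * K).mulVec ue + (2 : ℝ) • v
      + Bᵀ.mulVec lam + μ • νu) ⬝ᵥ (u - ue) = 0 := by
    rw [hstatu, zero_dotProduct]
  have hex' : 2 * ((Cᵀ * C).mulVec xe ⬝ᵥ (x - xe)) + 2 * (z ⬝ᵥ (x - xe))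
      + (lam ⬝ᵥ A.mulVec (x - xe) - lam ⬝ᵥ (x - xe)) + μ * (νx ⬝ᵥ (x - xe)) = 0 := by
    have h := hex
    simp only [add_dotProduct, smul_dotProduct, smul_eq_mul,
      Matrix.sub_mulVec, sub_dotProduct, Matrix.one_mulVec] at h
    rw [hAt] at h
    linarith
  have heu' : 2 * ((Kᵀ * K).mulVec ue ⬝ᵥ (u - ue)) + 2 * (v ⬝ᵥ (u - ue))
      + lam ⬝ᵥ B.mulVec (u - ue) + μ * (νu ⬝ᵥ (u - ue)) = 0 := by
    have h := heu
    simp only [add_dotProduct, smul_dotProduct, smul_eq_mul] at h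
    rw [hBt] at h
    linarith
  have hlamy : lam ⬝ᵥ (y - x)
      = lam ⬝ᵥ A.mulVec (x - xe) + lam ⬝ᵥ B.mulVec (u - ue) - lam ⬝ᵥ (x - xe) := by
    rw [← dotProduct_add, hF1]
    simp only [dotProduct_sub]
    ring
  have h1 := hdiss (x - xe) (u - ue)
  rw [hF1] at h1
  have t1 : νx ⬝ᵥ (x - xe) + νu ⬝ᵥ (u - ue) ≤ g (x, u) - g (xe, ue) := by
    have := hsub x u; linarith
  have t2 : μ * (νx ⬝ᵥ (x - xe) + νu ⬝ᵥ (u - ue)) ≤ μ * (g (x, u) - g (xe, ue)) :=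
    mul_le_mul_of_nonneg_left t1 hμ
  have t3 : μ * g (x, u) ≤ 0 := mul_nonpos_of_nonneg_of_nonpos hμ hxu
  have t4 : μ * (νx ⬝ᵥ (x - xe)) + μ * (νu ⬝ᵥ (u - ue)) ≤ 0 := by nlinarith
  linarith [hVd, hℓd, hlamy, hex', heu', h1, t4]
end

section
/- Let (x*(i), u*(i))_{i=0..N−1} be a sequence in ℝ^n × ℝ^m and (x_e, u_e) a reference point. Suppose there exist a function V : ℝ^n → ℝ bounded below by m_V on the relevant set, s > 0, and M > 0 such that V(x*(i+1)) − V(x*(i)) + s(‖x*(i) − x_e‖² + ‖u*(i) − u_e‖²) ≤ ℓ(x*(i),u*(i)) − ℓ(x_e,u_e) for all i = 0,…,N−1, and Σ_{i=0}^{N−1}(ℓ(x*(i),u*(i)) − ℓ(x_e,u_e)) ≤ M, and V(x*(0)) ≤ M_V. Then Σ_{i=0}^{N−1} (‖x*(i) − x_e‖² + ‖u*(i) − u_e‖²) ≤ (M + M_V − m_V)/s, and consequently, for every ε > 0, the number of indices i ∈ {0,…,N−1} with ‖x*(i) − x_e‖² + ‖u*(i) − u_e‖² > ε is at most (M + M_V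 − m_V)/(s ε), uniformly in N. -/
/-- The core telescoping/counting argument for the measure turnpike property:
summing the strict dissipation inequality gives a uniform bound on the sum of
squared deviations, and a Markov-type bound then controls the number of indices
where the deviation exceeds `ε`. -/
theorem turnpike_counting_bound
    (n m : ℕ) (N : ℕ)
    (xs : ℕ → EuclideanSpace ℝ (Fin n)) (us : ℕ → EuclideanSpace ℝ (Fin m))
    (xe : EuclideanSpace ℝ (Fin n)) (ue : EuclideanSpace ℝ (Fin m))
    (ℓ : EuclideanSpace ℝ (Fin n) → EuclideanSpace ℝ (Fin m) → ℝ)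
    (V : EuclideanSpace ℝ (Fin n) → ℝ)
    (s : ℝ) (hs : 0 < s) (M M_V m_V : ℝ)
    (hlow : ∀ i ≤ N, m_V ≤ V (xs i))
    (hdiss : ∀ i < N,
      V (xs (i + 1)) - V (xs i) + s * (‖xs i - xe‖ ^ 2 + ‖us i - ue‖ ^ 2)
        ≤ ℓ (xs i) (us i) - ℓ xe ue)
    (hsum : ∑ i ∈ Finset.range N, (ℓ (xs i) (us i) - ℓ xe ue) ≤ M)
    (hV0 : V (xs 0) ≤ M_V) :
    (∑ i ∈ Finset.range N, (‖xs i - xe‖ ^ 2 + ‖us i - ue‖ ^ 2)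
        ≤ (M + M_V - m_V) / s)
    ∧ ∀ ε : ℝ, 0 < ε →
      (((Finset.range N).filter
          (fun i => ε < ‖xs i - xe‖ ^ 2 + ‖us i - ue‖ ^ 2)).card : ℝ)
        ≤ (M + M_V - m_V) / (s * ε) := by
  obtain ⟨d, hd⟩ : ∃ d : ℕ → ℝ,
      ∀ i, d i = ‖xs i - xe‖ ^ 2 + ‖us i - ue‖ ^ 2 := ⟨_, fun i => rfl⟩
  simp only [← hd] at hdiss ⊢
  have hdnn : ∀ i, 0 ≤ d i := fun i => by rw [hd]; positivity
  have htel : ∑ i ∈ Finset.range N, (V (xs (i + 1)) - V (xs i))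
      = V (xs N) - V (xs 0) := Finset.sum_range_sub (fun i => V (xs i)) N
  have hkey : V (xs N) - V (xs 0) + s * ∑ i ∈ Finset.range N, d i ≤ M := by
    calc V (xs N) - V (xs 0) + s * ∑ i ∈ Finset.range N, d i
        = ∑ i ∈ Finset.range N,
            (V (xs (i + 1)) - V (xs i) + s * d i) := by
          rw [Finset.sum_add_distrib, htel, ← Finset.mul_sum]
      _ ≤ ∑ i ∈ Finset.range N, (ℓ (xs i) (us i) - ℓ xe ue) := by
          exact Finset.sum_le_sum fun i hi =>
            hdiss i (Finset.mem_range.mp hi)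
      _ ≤ M := hsum
  have hsumd : ∑ i ∈ Finset.range N, d i ≤ (M + M_V - m_V) / s := by
    rw [le_div_iff₀ hs]
    have h1 : m_V ≤ V (xs N) := hlow N le_rfl
    nlinarith [hkey]
  refine ⟨hsumd, fun ε hε => ?_⟩
  set S := (Finset.range N).filter (fun i => ε < d i) with hS
  have hcard : (S.card : ℝ) * ε ≤ ∑ i ∈ Finset.range N, d i := by
    calc (S.card : ℝ) * ε = ∑ _i ∈ S, ε := by
          rw [Finset.sum_const, nsmul_eq_mul]
      _ ≤ ∑ i ∈ S, d i := Finset.sum_le_sum fun i hi =>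
          le_of_lt (Finset.mem_filter.mp hi).2
      _ ≤ ∑ i ∈ Finset.range N, d i :=
          Finset.sum_le_sum_of_subset_of_nonneg (Finset.filter_subset _ _)
            (fun i _ _ => hdnn i)
  rw [le_div_iff₀ (by positivity)]
  calc (S.card : ℝ) * (s * ε) = ((S.card : ℝ) * ε) * s := by ring
    _ ≤ ((M + M_V - m_V) / s) * s := by
        apply mul_le_mul_of_nonneg_right _ hs.le
        exact hcard.trans hsumd
    _ = M + M_V - m_V := div_mul_cancel₀ _ hs.ne'
end

section
/- In the setting of the previous closed-loop system (A with scaled-rotation block and unit (3,3) entry, B = (0,0,−1)ᵀ, feedback u(x) = min{1, x₃ − e^{−0.1}√(x₁²+x₂²)}), assume the initial condition x₀ ∈ X satisfies (x₀)₃ ≤ M for some M ∈ ℕ. Then for all integer steps N ≥ M, the closed-loop trajectory satisfies x₃(N+1) = e^{−0.1}√(x₁(N)² + x₂(N)²), and hence ‖x(N)‖ ≤ M₀ e^{−0.1 N} for a constant M₀ depending only on M; i.e., the trajectory converges to the origin at a uniform exponential rate. -/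
open Matrix Real


lemma key_arith_closed_loop (r0 p q : ℝ) (hr0 : 0 ≤ r0) (hp : 1 ≤ p) (hpq : p ≤ q)
    (hr0q : r0 ≤ q) :
    Real.exp (-0.1 * p) * r0 - (q - p) ≤ Real.exp (-0.1 * (q + 1)) * r0 + 1 := by
  set a := Real.exp (-0.1 * p) with hadef
  have ha : 0 < a := Real.exp_pos _
  have hbsplit : Real.exp (-0.1 * (q + 1)) = a * Real.exp (-(0.1 * (q + 1 - p))) := by
    rw [hadef, ← Real.exp_add, show -0.1 * p + -(0.1 * (q + 1 - p)) = -0.1 * (q + 1) by ring]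
  set b := Real.exp (-(0.1 * (q + 1 - p))) with hbdef
  have hb : 0 < b := Real.exp_pos _
  have har0 : 0 ≤ a * r0 := mul_nonneg ha.le hr0
  rw [hbsplit]
  by_cases hcase : a * r0 ≤ 10
  · have h1e : 1 - b ≤ 0.1 * (q + 1 - p) := by
      have := Real.add_one_le_exp (-(0.1 * (q + 1 - p)))
      rw [← hbdef] at this
      linarith
    have hy : 0 ≤ 0.1 * (q + 1 - p) := by linarith
    nlinarith [mul_le_mul_of_nonneg_left h1e har0, mul_le_mul_of_nonneg_right hcase hy]
  · push_neg at hcase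
    have hE : 0.1 * p + 1 ≤ Real.exp (0.1 * p) := Real.add_one_le_exp _
    set E := Real.exp (0.1 * p) with hEdef
    have hEp : 0 < E := Real.exp_pos _
    have haE : a * E = 1 := by
      rw [hadef, hEdef, ← Real.exp_add, show -0.1 * p + 0.1 * p = 0 by ring, Real.exp_zero]
    have hr0E : 10 * E < r0 := by
      have h4 := mul_lt_mul_of_pos_right hcase hEp
      calc 10 * E < a * r0 * E := h4
        _ = r0 * (a * E) := by ring
        _ = r0 := by rw [haE, mul_one]
    have hqbig : 10 + p < q := by linarith
    have hqE : q ≤ (q - p + 1) * E := by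
      nlinarith [mul_le_mul_of_nonneg_left hE (by linarith : (0:ℝ) ≤ q - p + 1),
        mul_nonneg (by linarith : (0:ℝ) ≤ p) (by linarith : (0:ℝ) ≤ q - p + 1 - 10)]
    have hfin : a * r0 ≤ q - p + 1 := by
      have h2 : r0 ≤ (q - p + 1) * E := hr0q.trans hqE
      have h3 := mul_le_mul_of_nonneg_left h2 ha.le
      calc a * r0 ≤ a * ((q - p + 1) * E) := h3
        _ = (q - p + 1) * (a * E) := by ring
        _ = q - p + 1 := by rw [haE, mul_one]
    have hab : 0 ≤ a * b * r0 := mul_nonneg (mul_nonneg ha.le hb.le) hr0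
    linarith

/-- Uniform exponential convergence of the closed-loop trajectory: if the initial
state lies in the cone `X` with `(x₀)₃ ≤ M`, then after at most `M` steps the
feedback is exact, `x₃(N+1) = e^{−0.1}√(x₁(N)² + x₂(N)²)` for all `N ≥ M`, and the
whole trajectory converges to the origin at a uniform exponential rate. -/
theorem closed_loop_exponential_convergence
    (A : Matrix (Fin 3) (Fin 3) ℝ)
    (hA : A = !![Real.exp (-0.1) * Real.cos (π / 4), Real.exp (-0.1) * Real.sin (π / 4), 0;
                 -(Real.exp (-0.1) * Real.sin (π / 4)), Real.exp (-0.1) * Real.cos (π / 4), 0;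
                 0, 0, 1])
    (Bv : Fin 3 → ℝ) (hB : Bv = ![0, 0, -1])
    (u : (Fin 3 → ℝ) → ℝ)
    (hu : ∀ x, u x = min 1 (x 2 - Real.exp (-0.1) * Real.sqrt ((x 0) ^ 2 + (x 1) ^ 2)))
    (x : ℕ → Fin 3 → ℝ)
    (hdyn : ∀ i, x (i + 1) = A.mulVec (x i) + u (x i) • Bv)
    (hx0 : Real.sqrt ((x 0 0) ^ 2 + (x 0 1) ^ 2) ≤ x 0 2)
    (M : ℕ) (hM : x 0 2 ≤ M) :
    ∃ M₀ : ℝ, 0 < M₀ ∧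
      (∀ N : ℕ, M ≤ N →
        x (N + 1) 2 = Real.exp (-0.1) * Real.sqrt ((x N 0) ^ 2 + (x N 1) ^ 2)) ∧
      (∀ N : ℕ, Real.sqrt ((x N 0) ^ 2 + (x N 1) ^ 2 + (x N 2) ^ 2)
          ≤ M₀ * Real.exp (-0.1 * N)) := by
  subst hA hB
  -- the planar radius
  set r : ℕ → ℝ := fun i => Real.sqrt ((x i 0) ^ 2 + (x i 1) ^ 2) with hrdef
  have hrnn : ∀ i, 0 ≤ r i := fun i => Real.sqrt_nonneg _
  have hEpos : (0:ℝ) < Real.exp (-0.1) := Real.exp_pos _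
  have hE1 : Real.exp (-0.1) ≤ 1 := by
    rw [show (1:ℝ) = Real.exp 0 by simp]
    exact Real.exp_le_exp.mpr (by norm_num)
  -- components of the dynamics
  have h0 : ∀ i, x (i+1) 0
      = Real.exp (-0.1) * Real.cos (π/4) * x i 0 + Real.exp (-0.1) * Real.sin (π/4) * x i 1 := by
    intro i
    rw [hdyn i]
    simp [Matrix.mulVec, dotProduct, Fin.sum_univ_three]
    try ring
  have h1 : ∀ i, x (i+1) 1
      = -(Real.exp (-0.1) * Real.sin (π/4)) * x i 0 + Real.exp (-0.1) * Real.cos (π/4) * x i 1 := by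
    intro i
    rw [hdyn i]
    simp [Matrix.mulVec, dotProduct, Fin.sum_univ_three]
    try ring
  have h2 : ∀ i, x (i+1) 2 = x i 2 - u (x i) := by
    intro i
    rw [hdyn i]
    simp [Matrix.mulVec, dotProduct, Fin.sum_univ_three]
    try ring
  -- the radius contracts exactly
  have hr : ∀ i, r (i+1) = Real.exp (-0.1) * r i := by
    intro i
    have hsq : (x (i+1) 0) ^ 2 + (x (i+1) 1) ^ 2
        = (Real.exp (-0.1)) ^ 2 * ((x i 0) ^ 2 + (x i 1) ^ 2) := by
      rw [h0 i, h1 i]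
      linear_combination (Real.exp (-0.1)) ^ 2 * ((x i 0) ^ 2 + (x i 1) ^ 2)
        * (Real.sin_sq_add_cos_sq (π/4))
    simp only [hrdef]
    rw [hsq, Real.sqrt_mul (sq_nonneg _),
      Real.sqrt_sq hEpos.le]
  -- the height satisfies a max recursion
  have hmax : ∀ i, x (i+1) 2 = max (x i 2 - 1) (Real.exp (-0.1) * r i) := by
    intro i
    rw [h2 i, hu]
    simp only [hrdef]
    rcases le_total 1 (x i 2 - Real.exp (-0.1) * Real.sqrt ((x i 0) ^ 2 + (x i 1) ^ 2)) with h | h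
    · rw [min_eq_left h, max_eq_left (by linarith)]
    · rw [min_eq_right h, max_eq_right (by linarith)]
      ring
  -- cone invariance
  have hcone : ∀ i, r i ≤ x i 2 := by
    intro i
    induction i with
    | zero => exact hx0
    | succ i ih =>
      rw [hmax i, hr i]
      exact le_max_right _ _
  have hx2nn : ∀ i, 0 ≤ x i 2 := fun i => (hrnn i).trans (hcone i)
  -- height is nonincreasing
  have hmono : ∀ i, x (i+1) 2 ≤ x i 2 := by
    intro i
    rw [hmax i]
    refine max_le (by linarith) ?_
    calc Real.exp (-0.1) * r i ≤ 1 * r i := by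
          exact mul_le_mul_of_nonneg_right hE1 (hrnn i)
      _ = r i := one_mul _
      _ ≤ x i 2 := hcone i
  have hx2le : ∀ i, x i 2 ≤ x 0 2 := by
    intro i
    induction i with
    | zero => exact le_refl _
    | succ i ih => exact (hmono i).trans ih
  -- explicit formula for the radius
  have hrf : ∀ i : ℕ, r i = Real.exp (-0.1 * i) * r 0 := by
    intro i
    induction i with
    | zero => simp
    | succ i ih =>
      rw [hr i, ih, ← mul_assoc, ← Real.exp_add]
      push_cast
      ring_nf
  have hr0M : r 0 ≤ M := hx0.trans hM
  -- unrolled max bound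
  have hQ : ∀ N : ℕ, x N 2 ≤ x 0 2 - N ∨
      ∃ j : ℕ, 1 ≤ j ∧ j ≤ N ∧ x N 2 ≤ r j - ((N:ℝ) - j) := by
    intro N
    induction N with
    | zero => left; simp
    | succ N ih =>
      rw [hmax N]
      rcases le_total (x N 2 - 1) (Real.exp (-0.1) * r N) with h | h
      · right
        exact ⟨N+1, Nat.le_add_left 1 N, le_refl _, by
          rw [max_eq_right h, ← hr N]; push_cast; simp⟩
      · rw [max_eq_left h]
        rcases ih with h' | ⟨j, hj1, hjN, hle⟩
        · left; push_cast; linarith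
        · right
          exact ⟨j, hj1, hjN.trans (Nat.le_succ N), by push_cast; linarith⟩
  -- arithmetic estimate
  have harith : ∀ N j : ℕ, M ≤ N → 1 ≤ j → j ≤ N →
      r j - ((N:ℝ) - j) ≤ Real.exp (-0.1) * r N + 1 := by
    intro N j hMN hj1 hjN
    have hMN' : (M:ℝ) ≤ N := by exact_mod_cast hMN
    have hrj : r j = Real.exp (-0.1 * (j:ℝ)) * r 0 := hrf j
    have hrN : Real.exp (-0.1) * r N = Real.exp (-0.1 * ((N:ℝ) + 1)) * r 0 := by
      rw [hrf N, ← mul_assoc, ← Real.exp_add,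
        show -0.1 + -0.1 * (N:ℝ) = -0.1 * ((N:ℝ) + 1) by ring]
    rw [hrj, hrN]
    exact key_arith_closed_loop (r 0) (j:ℝ) (N:ℝ) (hrnn 0) (by exact_mod_cast hj1)
      (by exact_mod_cast hjN) (hr0M.trans hMN')
  -- exact feedback after M steps
  have hexact : ∀ N : ℕ, M ≤ N → x (N+1) 2 = Real.exp (-0.1) * r N := by
    intro N hMN
    have hslack : x N 2 ≤ Real.exp (-0.1) * r N + 1 := by
      rcases hQ N with h | ⟨j, hj1, hjN, hle⟩
      · have hMN' : (M:ℝ) ≤ N := by exact_mod_cast hMN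
        have : Real.exp (-0.1) * r N ≥ 0 := mul_nonneg hEpos.le (hrnn N)
        linarith
      · exact hle.trans (harith N j hMN hj1 hjN)
    rw [hmax N, max_eq_right (by linarith)]
  -- the constant
  refine ⟨2 * ((M:ℝ) + 1) * Real.exp (0.1 * ((M:ℝ) + 1)), by positivity, ?_, ?_⟩
  · intro N hMN
    have := hexact N hMN
    simp only [hrdef] at this
    exact this
  · intro N
    -- bound the norm by r N + x N 2 ≤ 2 * x N 2
    have hnorm : Real.sqrt ((x N 0) ^ 2 + (x N 1) ^ 2 + (x N 2) ^ 2) ≤ r N + x N 2 := by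
      have hsq : (r N) ^ 2 = (x N 0) ^ 2 + (x N 1) ^ 2 := by
        simp only [hrdef]
        exact Real.sq_sqrt (by positivity)
      have hle : (x N 0) ^ 2 + (x N 1) ^ 2 + (x N 2) ^ 2 ≤ (r N + x N 2) ^ 2 := by
        nlinarith [mul_nonneg (hrnn N) (hx2nn N)]
      calc Real.sqrt ((x N 0) ^ 2 + (x N 1) ^ 2 + (x N 2) ^ 2)
          ≤ Real.sqrt ((r N + x N 2) ^ 2) := Real.sqrt_le_sqrt hle
        _ = r N + x N 2 := Real.sqrt_sq (add_nonneg (hrnn N) (hx2nn N))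
    have h2x : r N + x N 2 ≤ 2 * x N 2 := by linarith [hcone N]
    have hrNM : r N ≤ (M:ℝ) * Real.exp (-0.1 * N) := by
      rw [hrf N]
      calc Real.exp (-0.1 * N) * r 0 ≤ Real.exp (-0.1 * N) * M :=
          mul_le_mul_of_nonneg_left hr0M (Real.exp_pos _).le
        _ = (M:ℝ) * Real.exp (-0.1 * N) := by ring
    rcases le_or_gt N M with hNM | hNM
    · -- early phase: x N 2 ≤ M
      have hx2M : x N 2 ≤ M := (hx2le N).trans hM
      have hexp1 : (1:ℝ) ≤ Real.exp (0.1 * ((M:ℝ) + 1)) * Real.exp (-0.1 * N) := by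
        rw [← Real.exp_add]
        apply Real.one_le_exp
        have : (N:ℝ) ≤ M := by exact_mod_cast hNM
        linarith
      calc Real.sqrt ((x N 0) ^ 2 + (x N 1) ^ 2 + (x N 2) ^ 2)
          ≤ 2 * x N 2 := hnorm.trans h2x
        _ ≤ 2 * ((M:ℝ) + 1) := by linarith
        _ = 2 * ((M:ℝ) + 1) * 1 := by ring
        _ ≤ 2 * ((M:ℝ) + 1) * (Real.exp (0.1 * ((M:ℝ) + 1)) * Real.exp (-0.1 * N)) := by
            apply mul_le_mul_of_nonneg_left hexp1 (by positivity)
        _ = 2 * ((M:ℝ) + 1) * Real.exp (0.1 * ((M:ℝ) + 1)) * Real.exp (-0.1 * N) := by ring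
    · -- late phase: exact mode, x N 2 = r N
      obtain ⟨K, rfl⟩ : ∃ K, N = K + 1 := ⟨N - 1, by omega⟩
      have hMK : M ≤ K := by omega
      have hxK : x (K+1) 2 = r (K+1) := by rw [hexact K hMK, hr K]
      have hexpge : (1:ℝ) ≤ Real.exp (0.1 * ((M:ℝ) + 1)) := Real.one_le_exp (by positivity)
      calc Real.sqrt ((x (K+1) 0) ^ 2 + (x (K+1) 1) ^ 2 + (x (K+1) 2) ^ 2)
          ≤ 2 * x (K+1) 2 := hnorm.trans h2x
        _ = 2 * r (K+1) := by rw [hxK]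
        _ ≤ 2 * ((M:ℝ) * Real.exp (-0.1 * (K+1:ℕ))) := by linarith
        _ ≤ 2 * ((M:ℝ) + 1) * Real.exp (0.1 * ((M:ℝ) + 1)) * Real.exp (-0.1 * (K+1:ℕ)) := by
            have hexp : (0:ℝ) < Real.exp (-0.1 * (K+1:ℕ)) := Real.exp_pos _
            have hc1 : (M:ℝ) ≤ ((M:ℝ) + 1) * Real.exp (0.1 * ((M:ℝ) + 1)) := by
              nlinarith [mul_nonneg (by positivity : (0:ℝ) ≤ (M:ℝ) + 1)
                (by linarith : (0:ℝ) ≤ Real.exp (0.1 * ((M:ℝ) + 1)) - 1)]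
            have hc2 := mul_le_mul_of_nonneg_right hc1 hexp.le
            nlinarith [hc2]
end
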